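/- Let $0 \le p < 1$ and $N \ge 2$, and set $\alpha_{N,p} = \frac{1-p}{2-p}\left(N + \frac{p}{1-p}\right)^{-1/(1-p)}$ and $q = \frac{2-p}{1-p}$. Then for $r > 0$ and $x_0 \in \mathbb{R}^N$, the function $w(y) = \alpha_{N,p}\, c^{1/(1-p)} (r^q - |y - x_0|^q)$ (with $c > 0$ a constant) satisfies $-\Delta w = c\,|\nabla w|^p$ at every point $y$ with $0 < |y - x_0| < r$, and $w = 0$ on $|y - x_0| = r$. -/

import Mathlib

open Real

noncomputable def laplacian {N : ℕ} (f : EuclideanSpace ℝ (Fin N) → ℝ)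
    (x : EuclideanSpace ℝ (Fin N)) : ℝ :=
  ∑ i : Fin N, fderiv ℝ (fun y => fderiv ℝ f y (EuclideanSpace.single i 1)) x
    (EuclideanSpace.single i 1)

section Aux

variable {N : ℕ}

set_option maxHeartbeats 1000000

private lemma aux_hds (x₀ u : EuclideanSpace ℝ (Fin N)) :
    HasFDerivAt (fun v : EuclideanSpace ℝ (Fin N) => ‖v - x₀‖ ^ 2)
      (2 • innerSL ℝ (u - x₀)) u := by
  have h := ((hasFDerivAt_id u).sub_const x₀).norm_sq
  simpa using h

private lemma aux_norm_rpow (x₀ v : EuclideanSpace ℝ (Fin N)) (q : ℝ) :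
    ‖v - x₀‖ ^ q = (‖v - x₀‖ ^ 2) ^ (q / 2) := by
  rw [← Real.rpow_natCast (‖v - x₀‖) 2, ← Real.rpow_mul (norm_nonneg _)]
  congr 1
  push_cast
  ring

private lemma aux_deriv (x₀ : EuclideanSpace ℝ (Fin N)) (K q r : ℝ)
    {u : EuclideanSpace ℝ (Fin N)} (hu : u ≠ x₀)
    (w : EuclideanSpace ℝ (Fin N) → ℝ)
    (hw : ∀ y, w y = K * (r ^ q - ‖y - x₀‖ ^ q)) :
    HasFDerivAt w
      ((-(K * q * (‖u - x₀‖ ^ 2) ^ (q / 2 - 1))) • innerSL ℝ (u - x₀)) u := by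
  have hs : (0:ℝ) < ‖u - x₀‖ ^ 2 := by
    have h0 : 0 < ‖u - x₀‖ := by
      rw [norm_pos_iff]; exact sub_ne_zero.mpr hu
    positivity
  have hrpow : HasDerivAt (fun t : ℝ => t ^ (q / 2))
      ((q / 2) * (‖u - x₀‖ ^ 2) ^ (q / 2 - 1)) (‖u - x₀‖ ^ 2) :=
    Real.hasDerivAt_rpow_const (Or.inl hs.ne')
  have h2 : HasDerivAt (fun t : ℝ => K * (r ^ q - t ^ (q / 2)))
      (K * (-((q / 2) * (‖u - x₀‖ ^ 2) ^ (q / 2 - 1)))) (‖u - x₀‖ ^ 2) :=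
    ((hrpow.const_sub (r ^ q)).const_mul K)
  have h3 := h2.comp_hasFDerivAt u (aux_hds x₀ u)
  have hweq : w = fun v : EuclideanSpace ℝ (Fin N) =>
      K * (r ^ q - (‖v - x₀‖ ^ 2) ^ (q / 2)) := by
    funext v
    rw [hw v, aux_norm_rpow]
  rw [hweq]
  refine h3.congr_fderiv ?_
  ext v
  simp [smul_smul]
  ring

private lemma aux_grad (x₀ : EuclideanSpace ℝ (Fin N)) (K q r : ℝ)
    {u : EuclideanSpace ℝ (Fin N)} (hu : u ≠ x₀)
    (w : EuclideanSpace ℝ (Fin N) → ℝ)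
    (hw : ∀ y, w y = K * (r ^ q - ‖y - x₀‖ ^ q)) :
    gradient w u = (-(K * q * (‖u - x₀‖ ^ 2) ^ (q / 2 - 1))) • (u - x₀) := by
  have h := aux_deriv x₀ K q r hu w hw
  have hg : HasGradientAt w
      ((-(K * q * (‖u - x₀‖ ^ 2) ^ (q / 2 - 1))) • (u - x₀)) u := by
    rw [hasGradientAt_iff_hasFDerivAt]
    refine h.congr_fderiv ?_
    ext v
    simp [InnerProductSpace.toDual_apply_apply, real_inner_smul_left]
  exact hg.gradient

private lemma aux_sum_sq (x₀ u : EuclideanSpace ℝ (Fin N)) :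
    ∑ i : Fin N, (u i - x₀ i) ^ 2 = ‖u - x₀‖ ^ 2 := by
  rw [EuclideanSpace.norm_eq, Real.sq_sqrt (by positivity)]
  refine Finset.sum_congr rfl fun i _ => ?_
  simp [PiLp.sub_apply, sq_abs]

private lemma aux_key (x₀ : EuclideanSpace ℝ (Fin N)) (K q : ℝ)
    {u : EuclideanSpace ℝ (Fin N)} (hu : u ≠ x₀) (i : Fin N) :
    fderiv ℝ (fun v : EuclideanSpace ℝ (Fin N) =>
        -(K * q) * ((‖v - x₀‖ ^ 2) ^ (q / 2 - 1) * (v i - x₀ i))) u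
        (EuclideanSpace.single i 1)
      = -(K * q) * ((‖u - x₀‖ ^ 2) ^ (q / 2 - 1)
          + (q - 2) * (‖u - x₀‖ ^ 2) ^ (q / 2 - 2) * (u i - x₀ i) ^ 2) := by
  have h0 : 0 < ‖u - x₀‖ := by
    rw [norm_pos_iff]; exact sub_ne_zero.mpr hu
  have hs : (0:ℝ) < ‖u - x₀‖ ^ 2 := by positivity
  have hf₁ : HasFDerivAt (fun v : EuclideanSpace ℝ (Fin N) =>
      (‖v - x₀‖ ^ 2) ^ (q / 2 - 1))
      (((q / 2 - 1) * (‖u - x₀‖ ^ 2) ^ (q / 2 - 1 - 1)) • (2 • innerSL ℝ (u - x₀))) u :=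
    by exact (Real.hasDerivAt_rpow_const (Or.inl hs.ne')).comp_hasFDerivAt u (aux_hds x₀ u)
  have hf₂ : HasFDerivAt (fun v : EuclideanSpace ℝ (Fin N) => v i - x₀ i)
      (EuclideanSpace.proj i : EuclideanSpace ℝ (Fin N) →L[ℝ] ℝ) u := by
    have h := (EuclideanSpace.proj i : EuclideanSpace ℝ (Fin N) →L[ℝ] ℝ).hasFDerivAt (x := u)
    exact h.sub_const (x₀ i)
  have hmul := (hf₁.mul hf₂).const_mul (-(K * q))
  erw [hmul.fderiv]
  simp [EuclideanSpace.inner_single_right, PiLp.sub_apply, EuclideanSpace.single_apply]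
  rw [show q / 2 - 1 - 1 = q / 2 - 2 by ring]
  ring

private lemma aux_lap (x₀ : EuclideanSpace ℝ (Fin N)) (K q r : ℝ)
    {u : EuclideanSpace ℝ (Fin N)} (hu : u ≠ x₀)
    (w : EuclideanSpace ℝ (Fin N) → ℝ)
    (hw : ∀ y, w y = K * (r ^ q - ‖y - x₀‖ ^ q)) :
    laplacian w u
      = -(K * q * ((N : ℝ) + q - 2)) * (‖u - x₀‖ ^ 2) ^ (q / 2 - 1) := by
  have h0 : 0 < ‖u - x₀‖ := by
    rw [norm_pos_iff]; exact sub_ne_zero.mpr hu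
  have hs : (0:ℝ) < ‖u - x₀‖ ^ 2 := by positivity
  have key : ∀ i : Fin N,
      fderiv ℝ (fun v => fderiv ℝ w v (EuclideanSpace.single i 1)) u
        (EuclideanSpace.single i 1)
      = -(K * q) * ((‖u - x₀‖ ^ 2) ^ (q / 2 - 1)
          + (q - 2) * (‖u - x₀‖ ^ 2) ^ (q / 2 - 2) * (u i - x₀ i) ^ 2) := by
    intro i
    have hev : (fun v => fderiv ℝ w v (EuclideanSpace.single i 1)) =ᶠ[nhds u]
        (fun v => -(K * q) * ((‖v - x₀‖ ^ 2) ^ (q / 2 - 1) * (v i - x₀ i))) := by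
      filter_upwards [IsOpen.mem_nhds isOpen_compl_singleton hu] with v hv
      rw [(aux_deriv x₀ K q r hv w hw).fderiv]
      simp [EuclideanSpace.inner_single_right, PiLp.sub_apply]
      ring
    rw [hev.fderiv_eq]
    exact aux_key x₀ K q hu i
  unfold laplacian
  rw [Finset.sum_congr rfl fun i _ => key i, ← Finset.mul_sum,
    Finset.sum_add_distrib, Finset.sum_const, ← Finset.mul_sum, aux_sum_sq]
  simp only [Finset.card_univ, Fintype.card_fin, nsmul_eq_mul]
  rw [mul_assoc ((q:ℝ) - 2),
    show (‖u - x₀‖ ^ 2) ^ (q / 2 - 2) * (‖u - x₀‖ ^ 2)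
        = (‖u - x₀‖ ^ 2) ^ (q / 2 - 1) by
      rw [show q / 2 - 1 = (q / 2 - 2) + 1 by ring, Real.rpow_add_one hs.ne']]
  ring

end Aux

theorem stmt_0 (N : ℕ) (hN : 2 ≤ N) (p : ℝ) (hp0 : 0 ≤ p) (hp1 : p < 1)
    (α q c r : ℝ) (hc : 0 < c) (hr : 0 < r)
    (hα : α = (1 - p) / (2 - p) * ((N : ℝ) + p / (1 - p)) ^ (-(1 : ℝ) / (1 - p)))
    (hq : q = (2 - p) / (1 - p))
    (x₀ : EuclideanSpace ℝ (Fin N))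
    (w : EuclideanSpace ℝ (Fin N) → ℝ)
    (hw : ∀ y, w y = α * c ^ ((1 : ℝ) / (1 - p)) * (r ^ q - ‖y - x₀‖ ^ q)) :
    (∀ y, 0 < ‖y - x₀‖ → ‖y - x₀‖ < r →
      -laplacian w y = c * ‖gradient w y‖ ^ p) ∧
    (∀ y, ‖y - x₀‖ = r → w y = 0) := by
  have h1p : (0:ℝ) < 1 - p := by linarith
  have h2p : (0:ℝ) < 2 - p := by linarith
  have hq2 : q - 2 = p / (1 - p) := by
    rw [hq]; field_simp; ring
  have hqpos : 0 < q := by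
    rw [hq]; positivity
  have hA : (0:ℝ) < (N : ℝ) + q - 2 := by
    have h2N : (2:ℝ) ≤ (N : ℝ) := by exact_mod_cast hN
    have hq2' : 0 ≤ q - 2 := by rw [hq2]; positivity
    linarith
  set K : ℝ := α * c ^ ((1 : ℝ) / (1 - p)) with hK
  have hαpos : 0 < α := by
    rw [hα]
    have hX : (0:ℝ) < (N : ℝ) + p / (1 - p) := by
      rw [← hq2]; linarith
    positivity
  have hKpos : 0 < K := by
    rw [hK]; positivity
  have hw' : ∀ y, w y = K * (r ^ q - ‖y - x₀‖ ^ q) := fun y => by rw [hw y, hK]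
  constructor
  · intro y hy hyr
    have hne : y ≠ x₀ := by
      intro h; rw [h] at hy; simp at hy
    have hn : 0 < ‖y - x₀‖ := hy
    have hs : (0:ℝ) < ‖y - x₀‖ ^ 2 := by positivity
    have hsq : (‖y - x₀‖ ^ 2) ^ (q / 2 - 1) = ‖y - x₀‖ ^ (q - 2) := by
      rw [← Real.rpow_natCast (‖y - x₀‖) 2, ← Real.rpow_mul (norm_nonneg _)]
      congr 1
      push_cast
      ring
    -- gradient norm
    have hgrad : ‖gradient w y‖ = K * q * ‖y - x₀‖ ^ (q - 1) := by
      rw [aux_grad x₀ K q r hne w hw', norm_smul, hsq]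
      have hpos : 0 ≤ K * q * ‖y - x₀‖ ^ (q - 2) := by positivity
      rw [Real.norm_eq_abs, abs_neg, abs_of_nonneg hpos]
      rw [show q - 1 = (q - 2) + 1 by ring, Real.rpow_add_one hn.ne']
      ring
    -- laplacian value
    have hlap : laplacian w y
        = -(K * q * ((N : ℝ) + q - 2)) * ‖y - x₀‖ ^ (q - 2) := by
      rw [aux_lap x₀ K q r hne w hw', hsq]
    rw [hlap, hgrad]
    -- RHS simplification
    have hRHS : c * (K * q * ‖y - x₀‖ ^ (q - 1)) ^ p
        = c * (K * q) ^ p * ‖y - x₀‖ ^ (q - 2) := by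
      rw [Real.mul_rpow (by positivity) (by positivity),
        ← Real.rpow_mul (le_of_lt hn)]
      have hexp : (q - 1) * p = q - 2 := by
        rw [hq2, hq]; field_simp; ring
      rw [hexp]
      ring
    rw [hRHS]
    have hmain : K * q * ((N : ℝ) + q - 2) = c * (K * q) ^ p := by
      have hX : (N : ℝ) + p / (1 - p) = (N : ℝ) + q - 2 := by
        rw [← hq2]; ring
      have hAq : α * q = ((N : ℝ) + q - 2) ^ (-(1 : ℝ) / (1 - p)) := by
        rw [hα, hX, hq]
        field_simp
      have hKq : K * q = ((N : ℝ) + q - 2) ^ (-(1 : ℝ) / (1 - p))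
          * c ^ ((1 : ℝ) / (1 - p)) := by
        rw [hK, ← hAq]; ring
      rw [hKq]
      rw [Real.mul_rpow (Real.rpow_nonneg hA.le _) (Real.rpow_nonneg hc.le _),
        ← Real.rpow_mul hA.le, ← Real.rpow_mul hc.le]
      rw [show -(1 : ℝ) / (1 - p) * p = -(1 : ℝ) / (1 - p) + 1 by field_simp; ring]
      rw [show (1 : ℝ) / (1 - p) * p = (1 : ℝ) / (1 - p) - 1 by field_simp; ring]
      rw [Real.rpow_add hA, Real.rpow_one, Real.rpow_sub hc, Real.rpow_one]
      field_simp
    rw [← hmain]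
    ring
  · intro y hyr
    rw [hw' y, hyr]
    ring
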